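/- arXiv:2601.19272 — 3 statements merged into one kernel-verified Lean document; each statement's English description precedes it below -/
import Mathlib

section
/- Let X be a Banach function space over ℝⁿ. Then for every measurable function f, ‖Mf‖_X ≤ ∫_0^1 ‖m_λ f‖_X dλ (in the sense that if the right-hand side is finite then Mf ∈ X and the inequality holds). -/
open MeasureTheory Set Filter
open scoped ENNReal Topology

noncomputable section

/-- A cube in `ℝⁿ` with sides parallel to the coordinate axes (positive side length). -/
def IsCube {n : ℕ} (Q : Set (Fin n → ℝ)) : Prop :=
  ∃ (a : Fin n → ℝ) (h : ℝ), 0 < h ∧ Q = Set.Icc a (fun i => a i + h)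

/-- The Hardy–Littlewood maximal operator: `Mf(x) = sup_{Q ∋ x} (1/|Q|) ∫_Q f`. -/
def maximal {n : ℕ} (f : (Fin n → ℝ) → ℝ≥0∞) (x : Fin n → ℝ) : ℝ≥0∞ :=
  ⨆ (Q : Set (Fin n → ℝ)) (_ : IsCube Q) (_ : x ∈ Q), (∫⁻ y in Q, f y) / volume Q

/-- The Hardy–Littlewood maximal operator restricted to a cube `Q`. -/
def maximalOn {n : ℕ} (Q : Set (Fin n → ℝ)) (f : (Fin n → ℝ) → ℝ≥0∞)
    (x : Fin n → ℝ) : ℝ≥0∞ :=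
  ⨆ (R : Set (Fin n → ℝ)) (_ : IsCube R) (_ : R ⊆ Q) (_ : x ∈ R),
    (∫⁻ y in R, f y) / volume R

/-- The non-increasing rearrangement `g*(t) = inf {α > 0 : |{y : g y > α}| ≤ t}`. -/
def rearr {n : ℕ} (g : (Fin n → ℝ) → ℝ≥0∞) (t : ℝ≥0∞) : ℝ≥0∞ :=
  sInf {α : ℝ≥0∞ | 0 < α ∧ volume {y | α < g y} ≤ t}

/-- The `λ`-median (local) maximal operator `m_λ f(x) = sup_{Q ∋ x} (f χ_Q)*(λ|Q|)`. -/
def mMed {n : ℕ} (la : ℝ) (f : (Fin n → ℝ) → ℝ≥0∞) (x : Fin n → ℝ) : ℝ≥0∞ :=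
  ⨆ (Q : Set (Fin n → ℝ)) (_ : IsCube Q) (_ : x ∈ Q),
    rearr (Q.indicator f) (ENNReal.ofReal la * volume Q)

/-- The (absolute value of a) real function viewed as an `ℝ≥0∞`-valued function. -/
def toE {n : ℕ} (f : (Fin n → ℝ) → ℝ) : (Fin n → ℝ) → ℝ≥0∞ :=
  fun y => ENNReal.ofReal |f y|

/-- `x` is a Lebesgue density point of the set `E`. -/
def IsDensityPoint {n : ℕ} (E : Set (Fin n → ℝ)) (x : Fin n → ℝ) : Prop :=
  Tendsto (fun r : ℝ => volume (E ∩ Metric.ball x r) / volume (Metric.ball x r))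
    (𝓝[>] (0 : ℝ)) (𝓝 1)

/-- `x` is a point of approximate continuity of `f`. -/
def ApproxContinuousAt {n : ℕ} (f : (Fin n → ℝ) → ℝ) (x : Fin n → ℝ) : Prop :=
  ∀ ε : ℝ, 0 < ε →
    Tendsto (fun r : ℝ =>
        volume ({y | ε ≤ |f y - f x|} ∩ Metric.ball x r) / volume (Metric.ball x r))
      (𝓝[>] (0 : ℝ)) (𝓝 0)

/-- A Banach function space over `ℝⁿ`, described by its (Luxemburg) function norm on
nonnegative extended-real-valued measurable functions. The ideal property is encoded by
`mono`, the Fatou property by `fatou`, and the saturation property by `saturation`. -/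
structure BanachFunctionSpace (n : ℕ) where
  N : ((Fin n → ℝ) → ℝ≥0∞) → ℝ≥0∞
  add_le : ∀ f g, N (fun x => f x + g x) ≤ N f + N g
  smul_eq : ∀ (c : ℝ≥0∞), c ≠ ∞ → ∀ f, N (fun x => c * f x) = c * N f
  mono : ∀ f g, (∀ᵐ x ∂(volume : Measure (Fin n → ℝ)), f x ≤ g x) → N f ≤ N g
  eq_zero : ∀ f, N f = 0 → f =ᵐ[(volume : Measure (Fin n → ℝ))] 0
  fatou : ∀ F : ℕ → ((Fin n → ℝ) → ℝ≥0∞),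
    (∀ j, ∀ᵐ x ∂(volume : Measure (Fin n → ℝ)), F j x ≤ F (j + 1) x) →
    N (fun x => ⨆ j, F j x) = ⨆ j, N (F j)
  saturation : ∀ E : Set (Fin n → ℝ), MeasurableSet E → 0 < volume E →
    ∃ F, F ⊆ E ∧ MeasurableSet F ∧ 0 < volume F ∧ N (F.indicator 1) ≠ ∞

/-- The associate (Köthe dual) norm of a function norm `N`:
`‖g‖_{X'} = sup_{‖h‖_X ≤ 1} ∫ g h`. -/
def assocOf {n : ℕ} (N : ((Fin n → ℝ) → ℝ≥0∞) → ℝ≥0∞)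
    (g : (Fin n → ℝ) → ℝ≥0∞) : ℝ≥0∞ :=
  ⨆ (h : (Fin n → ℝ) → ℝ≥0∞) (_ : N h ≤ 1), ∫⁻ x, g x * h x

/-- The norm of the space `X^{1/p}`: `‖f‖_{X^{1/p}} = ‖|f|^p‖_X^{1/p}`. -/
def powOf {n : ℕ} (N : ((Fin n → ℝ) → ℝ≥0∞) → ℝ≥0∞) (p : ℝ)
    (f : (Fin n → ℝ) → ℝ≥0∞) : ℝ≥0∞ :=
  (N fun x => f x ^ p) ^ (1 / p)

/-- An operator `T` is bounded with respect to the function norm `N`. -/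
def BoundedOn {n : ℕ} (N : ((Fin n → ℝ) → ℝ≥0∞) → ℝ≥0∞)
    (T : ((Fin n → ℝ) → ℝ≥0∞) → (Fin n → ℝ) → ℝ≥0∞) : Prop :=
  ∃ C : ℝ, 0 < C ∧ ∀ f, N (T f) ≤ ENNReal.ofReal C * N f

/-- `X` is `p`-convex. -/
def PConvex {n : ℕ} (N : ((Fin n → ℝ) → ℝ≥0∞) → ℝ≥0∞) (p : ℝ) : Prop :=
  ∀ f g, N (fun x => (f x ^ p + g x ^ p) ^ (1 / p)) ≤ (N f ^ p + N g ^ p) ^ (1 / p)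

/-- `X` is `q`-concave. -/
def QConcave {n : ℕ} (N : ((Fin n → ℝ) → ℝ≥0∞) → ℝ≥0∞) (q : ℝ) : Prop :=
  ∀ f g, (N f ^ q + N g ^ q) ^ (1 / q) ≤ N (fun x => (f x ^ q + g x ^ q) ^ (1 / q))

end

lemma rearr_anti {n : ℕ} (g : (Fin n → ℝ) → ℝ≥0∞) : Antitone (rearr g) :=
  fun _s _t hst => sInf_le_sInf (fun α hα => ⟨hα.1, hα.2.trans hst⟩)

lemma vol_lt_const (c : ℝ≥0∞) : volume {α : ℝ | 0 < α ∧ ENNReal.ofReal α < c} = c := by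
  rcases eq_or_ne c ∞ with rfl | hc
  · have h : {α : ℝ | 0 < α ∧ ENNReal.ofReal α < ∞} = Ioi 0 := by
      ext α; simp [ENNReal.ofReal_lt_top, mem_Ioi]
    rw [h, Real.volume_Ioi]
  · have h : {α : ℝ | 0 < α ∧ ENNReal.ofReal α < c} = Ioo 0 c.toReal := by
      ext α
      constructor
      · rintro ⟨h1, h2⟩; exact ⟨h1, (ENNReal.ofReal_lt_iff_lt_toReal h1.le hc).1 h2⟩
      · rintro ⟨h1, h2⟩; exact ⟨h1, (ENNReal.ofReal_lt_iff_lt_toReal h1.le hc).2 h2⟩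
    rw [h, Real.volume_Ioo, sub_zero, ENNReal.ofReal_toReal hc]

lemma layercake {β : Type*} [MeasurableSpace β] (ν : Measure β) [SFinite ν]
    (g : β → ℝ≥0∞) (hg : Measurable g) :
    ∫⁻ y, g y ∂ν = ∫⁻ α in Set.Ioi (0:ℝ), ν {y | ENNReal.ofReal α < g y} := by
  have hU : MeasurableSet {p : ℝ × β | ENNReal.ofReal p.1 < g p.2} :=
    measurableSet_lt (ENNReal.measurable_ofReal.comp measurable_fst) (hg.comp measurable_snd)
  set F : ℝ → β → ℝ≥0∞ := fun α y => {p : ℝ × β | ENNReal.ofReal p.1 < g p.2}.indicator 1 (α, y)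
    with hFdef
  have hFmeas : Measurable (Function.uncurry F) := by
    have : Function.uncurry F = {p : ℝ × β | ENNReal.ofReal p.1 < g p.2}.indicator 1 := by
      funext p; rfl
    rw [this]
    exact (measurable_one.indicator hU)
  have h1 : ∀ α : ℝ, ν {y | ENNReal.ofReal α < g y} = ∫⁻ y, F α y ∂ν := by
    intro α
    have : F α = Set.indicator {y | ENNReal.ofReal α < g y} 1 := by
      funext y
      simp only [hFdef, Set.indicator_apply, mem_setOf_eq, Pi.one_apply]
    rw [this, lintegral_indicator_one (measurableSet_lt measurable_const hg)]
  have h2 : ∀ y : β, ∫⁻ α in Set.Ioi (0:ℝ), F α y = g y := by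
    intro y
    have : (fun α => F α y) = Set.indicator {α : ℝ | ENNReal.ofReal α < g y} 1 := by
      funext α
      simp only [hFdef, Set.indicator_apply, mem_setOf_eq, Pi.one_apply]
    have hsm : MeasurableSet {α : ℝ | ENNReal.ofReal α < g y} :=
      measurableSet_lt ENNReal.measurable_ofReal measurable_const
    rw [this, lintegral_indicator_one hsm, Measure.restrict_apply hsm]
    have h3 : {α | ENNReal.ofReal α < g y} ∩ Ioi 0 = {α : ℝ | 0 < α ∧ ENNReal.ofReal α < g y} := by
      ext α
      simp only [mem_inter_iff, mem_setOf_eq, mem_Ioi, and_comm]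
    rw [h3, vol_lt_const]
  calc ∫⁻ y, g y ∂ν = ∫⁻ y, (∫⁻ α in Set.Ioi (0:ℝ), F α y) ∂ν := by
        simp_rw [h2]
    _ = ∫⁻ α in Set.Ioi (0:ℝ), ∫⁻ y, F α y ∂ν := by
        rw [← lintegral_lintegral_swap hFmeas.aemeasurable]
    _ = ∫⁻ α in Set.Ioi (0:ℝ), ν {y | ENNReal.ofReal α < g y} := by
        simp_rw [h1]

lemma cube_avg_le {n : ℕ} (g : (Fin n → ℝ) → ℝ≥0∞) (hg : Measurable g)
    (Q : Set (Fin n → ℝ)) (hQm : MeasurableSet Q) (hT0 : volume Q ≠ 0) (hTtop : volume Q ≠ ∞) :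
    (∫⁻ y in Q, g y) / volume Q
      ≤ ∫⁻ la in Ioo (0:ℝ) 1, rearr (Q.indicator g) (ENNReal.ofReal la * volume Q) := by
  set T := volume Q with hT
  set gQ := Q.indicator g with hgQ
  have hgQm : Measurable gQ := hg.indicator hQm
  set R : ℝ → ℝ≥0∞ := fun la => rearr gQ (ENNReal.ofReal la * T) with hRdef
  have hRanti : Antitone R := fun s t hst =>
    rearr_anti gQ (mul_le_mul_left (ENNReal.ofReal_le_ofReal hst) T)
  have hRmeas : Measurable R := hRanti.measurable
  set μ : ℝ → ℝ≥0∞ := fun α => volume {y | ENNReal.ofReal α < gQ y} with hμdef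
  set Fn : ℝ → ℝ≥0∞ :=
    fun α => (volume.restrict (Ioo (0:ℝ) 1)) {la | ENNReal.ofReal α < R la} with hFndef
  have hA : ∫⁻ y in Q, g y = ∫⁻ α in Ioi (0:ℝ), μ α := by
    rw [← lintegral_indicator hQm]
    exact layercake volume gQ hgQm
  have hB : ∫⁻ la in Ioo (0:ℝ) 1, R la = ∫⁻ α in Ioi (0:ℝ), Fn α := layercake _ R hRmeas
  have hμT : ∀ α : ℝ, 0 < α → μ α ≤ T := by
    intro α hα
    refine measure_mono fun y hy => ?_
    simp only [mem_setOf_eq] at hy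
    by_contra hyQ
    rw [hgQ, Set.indicator_of_notMem hyQ] at hy
    exact absurd hy (by simp)
  have hkey : ∀ α : ℝ, 0 < α → μ α ≤ T * Fn α := by
    intro α hα
    have hmono : Monotone (fun k : ℕ => {y | ENNReal.ofReal (α + 1/(k+1:ℝ)) < gQ y}) := by
      intro k l hkl y hy
      simp only [mem_setOf_eq] at hy ⊢
      refine lt_of_le_of_lt (ENNReal.ofReal_le_ofReal ?_) hy
      have : (1:ℝ)/(l+1) ≤ 1/(k+1) := by
        apply one_div_le_one_div_of_le (by positivity)
        exact_mod_cast by omega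
      linarith
    have hsets : {y | ENNReal.ofReal α < gQ y}
        = ⋃ k : ℕ, {y | ENNReal.ofReal (α + 1/(k+1:ℝ)) < gQ y} := by
      ext y
      simp only [mem_iUnion, mem_setOf_eq]
      constructor
      · intro hy
        rcases eq_or_ne (gQ y) ∞ with htop | htop
        · exact ⟨0, by rw [htop]; exact ENNReal.ofReal_lt_top⟩
        · have hlt : α < (gQ y).toReal := (ENNReal.ofReal_lt_iff_lt_toReal hα.le htop).1 hy
          obtain ⟨k, hk⟩ := exists_nat_one_div_lt (sub_pos.2 hlt)
          refine ⟨k, (ENNReal.ofReal_lt_iff_lt_toReal (by positivity) htop).2 ?_⟩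
          linarith
      · rintro ⟨k, hk⟩
        refine lt_of_le_of_lt (ENNReal.ofReal_le_ofReal ?_) hk
        have : (0:ℝ) < 1/(k+1:ℝ) := by positivity
        linarith
    have hμα : μ α = ⨆ k : ℕ, μ (α + 1/(k+1:ℝ)) := by
      simp only [hμdef]
      rw [hsets]
      exact Directed.measure_iUnion hmono.directed_le
    rw [hμα]
    refine iSup_le fun k => ?_
    set β := α + 1/(k+1:ℝ) with hβdef
    have hβpos : 0 < β := by positivity
    have hβα : α < β := by
      have : (0:ℝ) < 1/(k+1:ℝ) := by positivity
      simp only [hβdef]; linarith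
    have hμβT : μ β ≤ T := hμT β hβpos
    have hμβtop : μ β ≠ ∞ := (hμβT.trans_lt (lt_top_iff_ne_top.2 hTtop)).ne
    have hrtop : μ β / T ≠ ∞ := (ENNReal.div_lt_top hμβtop hT0).ne
    have hr1 : (μ β / T).toReal ≤ 1 := by
      have h1 : μ β / T ≤ 1 := by
        rw [ENNReal.div_le_iff_le_mul (Or.inl hT0) (Or.inl hTtop), one_mul]
        exact hμβT
      calc (μ β / T).toReal ≤ (1:ℝ≥0∞).toReal := ENNReal.toReal_mono (by simp) h1
        _ = 1 := by simp
    have hsub : Ioo (0:ℝ) ((μ β / T).toReal) ⊆ {la | ENNReal.ofReal α < R la} ∩ Ioo 0 1 := by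
      rintro la ⟨hla0, hla1⟩
      have hla1' : la < 1 := lt_of_lt_of_le hla1 hr1
      have h4 : ENNReal.ofReal la < μ β / T :=
        (ENNReal.ofReal_lt_iff_lt_toReal hla0.le hrtop).2 hla1
      have h5 : ENNReal.ofReal la * T < μ β :=
        (ENNReal.lt_div_iff_mul_lt (Or.inl hT0) (Or.inl hTtop)).1 h4
      have h6 : ENNReal.ofReal β ≤ R la := by
        refine le_sInf fun γ hγ => ?_
        by_contra hγβ
        push_neg at hγβ
        have h7 : μ β ≤ volume {y | γ < gQ y} := by
          refine measure_mono fun y hy => ?_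
          simp only [mem_setOf_eq] at hy ⊢
          exact lt_of_le_of_lt hγβ.le hy
        exact absurd (h7.trans hγ.2) (not_le.2 h5)
      refine ⟨?_, hla0, hla1'⟩
      simp only [mem_setOf_eq]
      exact lt_of_lt_of_le ((ENNReal.ofReal_lt_ofReal_iff hβpos).2 hβα) h6
    have h8 : μ β / T ≤ Fn α := by
      have hRset : MeasurableSet {la | ENNReal.ofReal α < R la} :=
        measurableSet_lt measurable_const hRmeas
      simp only [hFndef]
      rw [Measure.restrict_apply hRset]
      calc μ β / T = volume (Ioo (0:ℝ) ((μ β / T).toReal)) := by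
            rw [Real.volume_Ioo, sub_zero, ENNReal.ofReal_toReal hrtop]
        _ ≤ _ := measure_mono hsub
    calc μ β = μ β / T * T := (ENNReal.div_mul_cancel hT0 hTtop).symm
      _ = T * (μ β / T) := mul_comm _ _
      _ ≤ T * Fn α := mul_le_mul_right h8 _
  calc (∫⁻ y in Q, g y) / T ≤ (T * ∫⁻ α in Ioi (0:ℝ), Fn α) / T := by
        apply ENNReal.div_le_div_right
        rw [hA, ← lintegral_const_mul' T Fn hTtop]
        exact setLIntegral_mono' measurableSet_Ioi fun α hα => hkey α hα
    _ ≤ ∫⁻ α in Ioi (0:ℝ), Fn α := by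
        rw [ENNReal.div_le_iff_le_mul (Or.inl hT0) (Or.inl hTtop), mul_comm]
    _ = ∫⁻ la in Ioo (0:ℝ) 1, R la := hB.symm

lemma mct_Ioo (R : ℝ → ℝ≥0∞) (hR : Measurable R) :
    ∫⁻ la in Ioo (0:ℝ) 1, R la = ⨆ j : ℕ, ∫⁻ la in Ioo (1/(j+1:ℝ)) 1, R la := by
  have hsub : ∀ j : ℕ, Ioo (1/(j+1:ℝ)) 1 ⊆ Ioo (0:ℝ) 1 := by
    intro j la hla
    exact ⟨lt_trans (by positivity) hla.1, hla.2⟩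
  have hmono : Monotone fun j : ℕ => (Ioo (1/(j+1:ℝ)) 1).indicator R := by
    intro j l hjl
    apply Set.indicator_le_indicator_of_subset
    · intro la hla
      refine ⟨lt_of_le_of_lt ?_ hla.1, hla.2⟩
      apply one_div_le_one_div_of_le (by positivity)
      exact_mod_cast by omega
    · exact fun a => zero_le
  have hpt : (Ioo (0:ℝ) 1).indicator R = fun la => ⨆ j : ℕ, (Ioo (1/(j+1:ℝ)) 1).indicator R la := by
    funext la
    by_cases hla : la ∈ Ioo (0:ℝ) 1
    · rw [Set.indicator_of_mem hla]
      obtain ⟨j, hj⟩ := exists_nat_one_div_lt hla.1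
      apply le_antisymm
      · refine le_iSup_of_le j ?_
        rw [Set.indicator_of_mem (show la ∈ Ioo (1/(j+1:ℝ)) 1 from ⟨hj, hla.2⟩)]
      · exact iSup_le fun j => Set.indicator_le_self _ _ la
    · rw [Set.indicator_of_notMem hla]
      symm
      simp only [ENNReal.iSup_eq_zero]
      intro j
      rw [Set.indicator_of_notMem (fun h => hla (hsub j h))]
  calc ∫⁻ la in Ioo (0:ℝ) 1, R la = ∫⁻ la, (Ioo (0:ℝ) 1).indicator R la := by
        rw [lintegral_indicator measurableSet_Ioo]
    _ = ∫⁻ la, ⨆ j : ℕ, (Ioo (1/(j+1:ℝ)) 1).indicator R la := by rw [hpt]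
    _ = ⨆ j : ℕ, ∫⁻ la, (Ioo (1/(j+1:ℝ)) 1).indicator R la :=
        lintegral_iSup (fun j => hR.indicator measurableSet_Ioo) hmono
    _ = ⨆ j : ℕ, ∫⁻ la in Ioo (1/(j+1:ℝ)) 1, R la := by
        simp_rw [lintegral_indicator measurableSet_Ioo]


lemma mMed_anti {n : ℕ} (g : (Fin n → ℝ) → ℝ≥0∞) (x : Fin n → ℝ) :
    Antitone fun la => mMed la g x := by
  intro s t hst
  refine iSup_mono fun Q => iSup_mono fun _ => iSup_mono fun _ => ?_
  exact rearr_anti _ (mul_le_mul_left (ENNReal.ofReal_le_ofReal hst) _)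

lemma N_zero {n : ℕ} (X : BanachFunctionSpace n) : X.N (fun _ => 0) = 0 := by
  have h := X.smul_eq 0 (by simp) (fun _ => 0)
  simpa using h

lemma N_sum_le {n : ℕ} (X : BanachFunctionSpace n) (s : Finset ℕ) (c : ℕ → ℝ≥0∞)
    (hc : ∀ k, c k ≠ ∞) (F : ℕ → (Fin n → ℝ) → ℝ≥0∞) :
    X.N (fun x => ∑ k ∈ s, c k * F k x) ≤ ∑ k ∈ s, c k * X.N (F k) := by
  classical
  induction s using Finset.induction_on with
  | empty => simp [N_zero X]
  | @insert a s ha ih =>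
      have h1 : (fun x => ∑ k ∈ insert a s, c k * F k x)
          = fun x => c a * F a x + ∑ k ∈ s, c k * F k x := by
        funext x; rw [Finset.sum_insert ha]
      rw [h1, Finset.sum_insert ha]
      calc X.N (fun x => c a * F a x + ∑ k ∈ s, c k * F k x)
          ≤ X.N (fun x => c a * F a x) + X.N (fun x => ∑ k ∈ s, c k * F k x) :=
            X.add_le _ _
        _ ≤ c a * X.N (F a) + ∑ k ∈ s, c k * X.N (F k) := by
            rw [X.smul_eq (c a) (hc a) (F a)]
            exact add_le_add le_rfl ih
/-- Proposition 8 of the paper: `‖Mf‖_X ≤ ∫_0^1 ‖m_λ f‖_X dλ`. -/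
theorem stmt8 (n : ℕ) (X : BanachFunctionSpace n)
    (f : (Fin n → ℝ) → ℝ) (hf : Measurable f) :
    X.N (maximal (toE f)) ≤ ∫⁻ la in Set.Ioo (0 : ℝ) 1, X.N (mMed la (toE f)) := by
  classical
  have hgm : Measurable (toE f) := ENNReal.measurable_ofReal.comp hf.abs
  set g := toE f with hgdef
  set ψ : ℝ → ℝ≥0∞ := fun la => X.N (mMed la g) with hψdef
  have hψanti : Antitone ψ := fun s t hst =>
    X.mono _ _ (ae_of_all _ fun x => mMed_anti g x hst)
  have hψmeas : Measurable ψ := hψanti.measurable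
  set F : ℕ → (Fin n → ℝ) → ℝ≥0∞ :=
    fun j x => ∫⁻ la in Ioo (1/(j+1:ℝ)) 1, mMed la g x with hFdef
  have step1 : ∀ x, maximal g x ≤ ⨆ j, F j x := by
    intro x
    refine iSup_le fun Q => iSup_le fun hQ => iSup_le fun hx => ?_
    obtain ⟨a, h, hh, hQeq⟩ := hQ
    have hQm : MeasurableSet Q := by rw [hQeq]; exact measurableSet_Icc
    have hvol : volume Q = ENNReal.ofReal h ^ n := by
      rw [hQeq, Real.volume_Icc_pi]
      simp [add_sub_cancel_left]
    have hT0 : volume Q ≠ 0 := by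
      rw [hvol]
      exact pow_ne_zero _ (ENNReal.ofReal_pos.2 hh).ne'
    have hTtop : volume Q ≠ ∞ := by
      rw [hvol]; exact ENNReal.pow_ne_top ENNReal.ofReal_ne_top
    have hkey := cube_avg_le g hgm Q hQm hT0 hTtop
    set R : ℝ → ℝ≥0∞ := fun la => rearr (Q.indicator g) (ENNReal.ofReal la * volume Q)
      with hRdef
    have hRanti : Antitone R := fun s t hst =>
      rearr_anti _ (mul_le_mul_left (ENNReal.ofReal_le_ofReal hst) _)
    have hRm : Measurable R := hRanti.measurable
    have hRle : ∀ la : ℝ, R la ≤ mMed la g x := fun la =>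
      le_iSup_of_le Q (le_iSup_of_le ⟨a, h, hh, hQeq⟩ (le_iSup_of_le hx le_rfl))
    calc (∫⁻ y in Q, g y) / volume Q ≤ ∫⁻ la in Ioo (0:ℝ) 1, R la := hkey
      _ = ⨆ j : ℕ, ∫⁻ la in Ioo (1/(j+1:ℝ)) 1, R la := mct_Ioo R hRm
      _ ≤ ⨆ j : ℕ, F j x := iSup_mono fun j => lintegral_mono fun la => hRle la
  have hFmono : ∀ j, ∀ᵐ x ∂(volume : Measure (Fin n → ℝ)), F j x ≤ F (j+1) x := by
    intro j
    refine ae_of_all _ fun x => ?_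
    apply lintegral_mono_set
    intro la hla
    refine ⟨lt_of_le_of_lt ?_ hla.1, hla.2⟩
    apply one_div_le_one_div_of_le (by positivity)
    push_cast; linarith
  have step2 : ∀ j : ℕ, X.N (F j) ≤ ∫⁻ la in Ioo (0:ℝ) 1, ψ la := by
    intro j
    set b : ℕ → ℝ := fun k => (k+1:ℝ)/(j+1) with hbdef
    have hjpos : (0:ℝ) < (j:ℝ)+1 := by positivity
    set s : ℕ → Set ℝ := fun k => Ico (b k) (b (k+1)) ∩ Ioo 0 1 with hsdef
    have hsm : ∀ k, MeasurableSet (s k) := fun k => measurableSet_Ico.inter measurableSet_Ioo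
    have hsempty : ∀ k, j ≤ k → s k = ∅ := by
      intro k hk
      apply Set.eq_empty_of_forall_notMem
      intro la hla
      have hla' : la ∈ Ico (b k) (b (k+1)) ∩ Ioo 0 1 := hla
      obtain ⟨⟨h1, _⟩, _, h4⟩ := hla'
      have hbk : (1:ℝ) ≤ b k := by
        rw [hbdef, le_div_iff₀ hjpos]
        have hjk : (j:ℝ) ≤ (k:ℝ) := by exact_mod_cast hk
        linarith
      linarith
    have hvols : ∀ k, volume (s k) ≠ ∞ := by
      intro k
      refine ne_top_of_le_ne_top ?_ (measure_mono inter_subset_right)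
      simp [Real.volume_Ioo]
    have claimA : ∀ x, F j x ≤ ∑ k ∈ Finset.range j, volume (s k) * mMed (b k) g x := by
      intro x
      have hb0v : b 0 = 1/(j+1:ℝ) := by rw [hbdef]; norm_num
      have hsub : Ioo (1/(j+1:ℝ)) 1 ⊆ ⋃ k, s k := by
        intro la hla
        have hb0lt : b 0 < la := by rw [hb0v]; exact hla.1
        have hb0pos : 0 < b 0 := by rw [hb0v]; positivity
        have hexP : ∃ m, la < b m := by
          refine ⟨j+1, ?_⟩
          have h1 : (1:ℝ) < b (j+1) := by
            rw [hbdef, lt_div_iff₀ hjpos]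
            push_cast
            linarith
          linarith [hla.2]
        have hspec : la < b (Nat.find hexP) := Nat.find_spec hexP
        have hm0ne : Nat.find hexP ≠ 0 := by
          intro h0
          rw [h0] at hspec
          linarith
        obtain ⟨m, hm⟩ : ∃ m, Nat.find hexP = m + 1 :=
          ⟨Nat.find hexP - 1, (Nat.succ_pred_eq_of_pos (Nat.pos_of_ne_zero hm0ne)).symm⟩
        have hmin : ¬ la < b m := Nat.find_min hexP (by omega)
        rw [hm] at hspec
        refine mem_iUnion.2 ⟨m, ?_⟩
        exact ⟨⟨not_lt.1 hmin, hspec⟩, lt_trans hb0pos hb0lt, hla.2⟩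
      calc F j x = ∫⁻ la in Ioo (1/(j+1:ℝ)) 1, mMed la g x := rfl
        _ ≤ ∫⁻ la in ⋃ k, s k, mMed la g x := lintegral_mono_set hsub
        _ ≤ ∑' k, ∫⁻ la in s k, mMed la g x := lintegral_iUnion_le _ _
        _ ≤ ∑' k, volume (s k) * mMed (b k) g x := by
            refine ENNReal.tsum_le_tsum fun k => ?_
            calc ∫⁻ la in s k, mMed la g x ≤ ∫⁻ _ in s k, mMed (b k) g x :=
                  setLIntegral_mono' (hsm k) fun la hla => mMed_anti g x hla.1.1
              _ = mMed (b k) g x * volume (s k) := setLIntegral_const _ _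
              _ = volume (s k) * mMed (b k) g x := mul_comm _ _
        _ = ∑ k ∈ Finset.range j, volume (s k) * mMed (b k) g x := by
            apply tsum_eq_sum
            intro k hk
            rw [hsempty k (le_of_not_gt fun hlt => hk (Finset.mem_range.2 hlt)),
              measure_empty, zero_mul]
    have claimB : X.N (F j) ≤ ∑ k ∈ Finset.range j, volume (s k) * ψ (b k) :=
      calc X.N (F j)
          ≤ X.N (fun x => ∑ k ∈ Finset.range j, volume (s k) * mMed (b k) g x) :=
            X.mono _ _ (ae_of_all _ claimA)
        _ ≤ ∑ k ∈ Finset.range j, volume (s k) * ψ (b k) :=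
            N_sum_le X _ _ hvols _
    have claimC : ∑ k ∈ Finset.range j, volume (s k) * ψ (b k)
        ≤ ∫⁻ la in Ioo (0:ℝ) 1, ψ la := by
      set I : ℕ → Set ℝ := fun k => Ioo ((k:ℝ)/(j+1)) (b k) with hIdef
      have hIm : ∀ k, MeasurableSet (I k) := fun k => measurableSet_Ioo
      have hIsub : ∀ k ∈ Finset.range j, I k ⊆ Ioo (0:ℝ) 1 := by
        intro k hk la hla
        have hla' : la ∈ Ioo ((k:ℝ)/(j+1)) (b k) := hla
        simp only [Finset.mem_range] at hk
        constructor
        · refine lt_of_le_of_lt ?_ hla'.1; positivity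
        · refine lt_of_lt_of_le hla'.2 ?_
          rw [hbdef, div_le_one hjpos]
          have : (k:ℝ) + 1 ≤ (j:ℝ) + 1 := by
            have : (k:ℝ) + 1 ≤ (j:ℝ) := by exact_mod_cast hk
            linarith
          linarith
      have hIdisj : ∀ k l : ℕ, k < l → Disjoint (I k) (I l) := by
        intro k l hkl
        rw [Set.disjoint_left]
        intro la hla1 hla2
        have hla1' : la ∈ Ioo ((k:ℝ)/(j+1)) (b k) := hla1
        have hla2' : la ∈ Ioo ((l:ℝ)/(j+1)) (b l) := hla2
        have hle : b k ≤ (l:ℝ)/(j+1) := by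
          have hkl' : (k:ℝ) + 1 ≤ (l:ℝ) := by exact_mod_cast hkl
          exact (div_le_div_iff_of_pos_right hjpos).2 hkl'
        linarith [hla1'.2, hla2'.1]
      have hdisj : Set.PairwiseDisjoint (↑(Finset.range j)) I := by
        intro k _ l _ hkl
        rcases lt_or_gt_of_ne hkl with hlt | hlt
        · exact hIdisj k l hlt
        · exact (hIdisj l k hlt).symm
      have hterm : ∀ k ∈ Finset.range j, volume (s k) * ψ (b k) ≤ ∫⁻ la in I k, ψ la := by
        intro k hk
        have e1 : b (k+1) - b k = 1/(j+1:ℝ) := by rw [hbdef]; push_cast; ring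
        have e2 : b k - (k:ℝ)/(j+1) = 1/(j+1:ℝ) := by rw [hbdef]; push_cast; ring
        have h1 : volume (s k) ≤ volume (I k) := by
          calc volume (s k) ≤ volume (Ico (b k) (b (k+1))) := measure_mono inter_subset_left
            _ = ENNReal.ofReal (b (k+1) - b k) := Real.volume_Ico
            _ = volume (Ioo ((k:ℝ)/(j+1)) (b k)) := by rw [Real.volume_Ioo, e1, e2]
            _ = volume (I k) := rfl
        calc volume (s k) * ψ (b k) ≤ volume (I k) * ψ (b k) := mul_le_mul_left h1 _
          _ = ψ (b k) * volume (I k) := mul_comm _ _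
          _ = ∫⁻ _ in I k, ψ (b k) := (setLIntegral_const _ _).symm
          _ ≤ ∫⁻ la in I k, ψ la := by
              refine setLIntegral_mono' (hIm k) fun la hla => ?_
              have hla' : la ∈ Ioo ((k:ℝ)/(j+1)) (b k) := hla
              exact hψanti hla'.2.le
      calc ∑ k ∈ Finset.range j, volume (s k) * ψ (b k)
          ≤ ∑ k ∈ Finset.range j, ∫⁻ la in I k, ψ la := Finset.sum_le_sum hterm
        _ = ∫⁻ la in ⋃ k ∈ Finset.range j, I k, ψ la :=
            (lintegral_biUnion_finset hdisj (fun k _ => hIm k) _).symm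
        _ ≤ ∫⁻ la in Ioo (0:ℝ) 1, ψ la := by
            apply lintegral_mono_set
            intro la hla
            simp only [mem_iUnion, exists_prop] at hla
            obtain ⟨k, hk, hlak⟩ := hla
            exact hIsub k hk hlak
    exact claimB.trans claimC
  calc X.N (maximal g) ≤ X.N (fun x => ⨆ j, F j x) := X.mono _ _ (ae_of_all _ step1)
    _ = ⨆ j, X.N (F j) := X.fatou F hFmono
    _ ≤ ∫⁻ la in Ioo (0:ℝ) 1, ψ la := iSup_le step2
end

section
/- Let f be a measurable function on ℝⁿ such that |{x ∈ ℝⁿ : |f(x)| > α}| < ∞ for every α > 0. Then lim_{λ → 1⁻} m_λ f(x) = |f(x)| for almost every x ∈ ℝⁿ. -/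
open MeasureTheory Set Filter
open scoped ENNReal Topology

section Helpers

lemma aux_density (n : ℕ) (f : (Fin n → ℝ) → ℝ) (hf : Measurable f) :
    ∀ᵐ x ∂(volume : Measure (Fin n → ℝ)), ∀ ε δ : ℝ, 0 < ε → 0 < δ →
      ∃ r₀ > 0, ∀ s, 0 < s → s ≤ r₀ →
        volume ({y | ε ≤ |f y - f x|} ∩ Metric.closedBall x s)
          ≤ ENNReal.ofReal δ * volume (Metric.closedBall x s) := by
  have key : ∀ᵐ x ∂(volume : Measure (Fin n → ℝ)), ∀ p q : ℚ,
      Tendsto (fun r => volume (f ⁻¹' (Ioo (p:ℝ) q) ∩ Metric.closedBall x r)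
        / volume (Metric.closedBall x r)) (𝓝[>] 0) (𝓝 ((f ⁻¹' (Ioo (p:ℝ) q)).indicator 1 x)) := by
    rw [ae_all_iff]; intro p; rw [ae_all_iff]; intro q
    exact Besicovitch.ae_tendsto_measure_inter_div_of_measurableSet volume
      (hf measurableSet_Ioo)
  filter_upwards [key] with x hx ε δ hε hδ
  obtain ⟨p, hp1, hp2⟩ := exists_rat_btwn (show f x - ε < f x by linarith)
  obtain ⟨q, hq1, hq2⟩ := exists_rat_btwn (show f x < f x + ε by linarith)
  set E := f ⁻¹' (Ioo (p:ℝ) q) with hE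
  have hxE : x ∈ E := ⟨hp2, hq1⟩
  have hten := hx p q
  rw [indicator_of_mem hxE] at hten
  simp only [Pi.one_apply] at hten
  have hlt : (1 : ℝ≥0∞) - ENNReal.ofReal δ < 1 :=
    ENNReal.sub_lt_self ENNReal.one_ne_top one_ne_zero (by simpa using hδ)
  have h1 : ∀ᶠ r in 𝓝[>] (0:ℝ),
      1 - ENNReal.ofReal δ ≤ volume (E ∩ Metric.closedBall x r) / volume (Metric.closedBall x r) :=
    hten.eventually_const_le hlt
  obtain ⟨u, hu, hsub⟩ := mem_nhdsGT_iff_exists_Ioo_subset.1 h1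
  have hu' : (0:ℝ) < u := hu
  refine ⟨min (u/2) 1, by positivity, fun s hs hsu => ?_⟩
  have hsmem : s ∈ Ioo (0:ℝ) u :=
    ⟨hs, lt_of_le_of_lt (hsu.trans (min_le_left _ _)) (by linarith)⟩
  have hratio := hsub hsmem
  set B := Metric.closedBall x s with hB
  have hB0 : volume B ≠ 0 := (Metric.measure_closedBall_pos _ x hs).ne'
  have hBtop : volume B ≠ ∞ := measure_closedBall_lt_top.ne
  have hEB : (1 - ENNReal.ofReal δ) * volume B ≤ volume (E ∩ B) := by
    rw [← ENNReal.le_div_iff_mul_le (Or.inl hB0) (Or.inl hBtop)]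
    exact hratio
  have hbadsub : {y | ε ≤ |f y - f x|} ∩ B ⊆ B \ (E ∩ B) := by
    rintro y ⟨hy1, hy2⟩
    refine ⟨hy2, fun hyE => ?_⟩
    have h1 := hyE.1.1
    have h2 := hyE.1.2
    have hy1' : ε ≤ |f y - f x| := hy1
    have : |f y - f x| < ε := abs_sub_lt_iff.2 ⟨by linarith, by linarith⟩
    linarith
  have hEBmeas : MeasurableSet (E ∩ B) :=
    (hf measurableSet_Ioo).inter Metric.isClosed_closedBall.measurableSet
  calc volume ({y | ε ≤ |f y - f x|} ∩ B) ≤ volume (B \ (E ∩ B)) := measure_mono hbadsub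
    _ = volume B - volume (E ∩ B) :=
        measure_diff inter_subset_right hEBmeas.nullMeasurableSet
          ((measure_mono inter_subset_right).trans_lt measure_closedBall_lt_top).ne
    _ ≤ volume B - (1 - ENNReal.ofReal δ) * volume B := tsub_le_tsub_left hEB _
    _ ≤ ENNReal.ofReal δ * volume B := by
        rw [tsub_le_iff_right]
        calc volume B = 1 * volume B := (one_mul _).symm
          _ ≤ ((1 - ENNReal.ofReal δ) + ENNReal.ofReal δ) * volume B := by
              gcongr
              exact le_tsub_add
          _ = ENNReal.ofReal δ * volume B + (1 - ENNReal.ofReal δ) * volume B := by ring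

lemma aux_cube_vol (n : ℕ) (a : Fin n → ℝ) (h : ℝ) :
    volume (Icc a (fun i => a i + h)) = ENNReal.ofReal h ^ n := by
  rw [Real.volume_Icc_pi]
  simp [Finset.prod_const]

lemma aux_cb_eq (n : ℕ) (x : Fin n → ℝ) (r : ℝ) (hr : 0 ≤ r) :
    Metric.closedBall x r = Icc (fun i => x i - r) (fun i => (x i - r) + 2 * r) := by
  have hfun : (fun i : Fin n => Icc (x i - r) ((x i - r) + 2 * r))
      = fun i => Metric.closedBall (x i) r := by
    funext i
    rw [Real.closedBall_eq_Icc]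
    ring_nf
  rw [closedBall_pi x hr, ← Set.pi_univ_Icc, hfun]

lemma aux_cb_vol (n : ℕ) (x : Fin n → ℝ) (r : ℝ) (hr : 0 ≤ r) :
    volume (Metric.closedBall x r : Set (Fin n → ℝ))
      = ENNReal.ofReal (2 * r) ^ n := by
  rw [aux_cb_eq n x r hr, aux_cube_vol]

lemma aux_cb_cube (n : ℕ) (x : Fin n → ℝ) (r : ℝ) (hr : 0 < r) :
    IsCube (Metric.closedBall x r : Set (Fin n → ℝ)) :=
  ⟨fun i => x i - r, 2 * r, by linarith, aux_cb_eq n x r hr.le⟩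

lemma aux_cube_sub_ball (n : ℕ) (a : Fin n → ℝ) (h : ℝ) (hh : 0 ≤ h) (x : Fin n → ℝ)
    (hx : x ∈ Icc a (fun i => a i + h)) :
    Icc a (fun i => a i + h) ⊆ Metric.closedBall x h := by
  intro y hy
  rw [Metric.mem_closedBall, dist_comm, dist_pi_le_iff hh]
  intro i
  rw [Real.dist_eq, abs_le]
  have h1 := hx.1 i
  have h2 : x i ≤ a i + h := hx.2 i
  have h3 := hy.1 i
  have h4 : y i ≤ a i + h := hy.2 i
  constructor <;> linarith

lemma aux_subcube (n : ℕ) (a : Fin n → ℝ) (h r : ℝ) (hr : 0 < r) (hrh : r ≤ h)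
    (x : Fin n → ℝ) (hx : x ∈ Icc a (fun i => a i + h)) :
    ∃ a' : Fin n → ℝ, x ∈ Icc a' (fun i => a' i + r) ∧
      Icc a' (fun i => a' i + r) ⊆ Icc a (fun i => a i + h) := by
  refine ⟨fun i => min (x i) (a i + h - r), ⟨fun i => min_le_left _ _, fun i => ?_⟩,
    fun y hy => ⟨fun i => ?_, fun i => ?_⟩⟩
  · show x i ≤ min (x i) (a i + h - r) + r
    have h2 : x i ≤ a i + h := hx.2 i
    rcases le_total (x i) (a i + h - r) with hc | hc
    · rw [min_eq_left hc]; linarith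
    · rw [min_eq_right hc]; linarith
  · have h1 : min (x i) (a i + h - r) ≤ y i := hy.1 i
    have h2 : a i ≤ min (x i) (a i + h - r) := le_min (hx.1 i) (by linarith)
    linarith
  · have h4 : y i ≤ min (x i) (a i + h - r) + r := hy.2 i
    have h5 : min (x i) (a i + h - r) ≤ a i + h - r := min_le_right _ _
    show y i ≤ a i + h
    linarith

end Helpers

/-- Proposition 10 of the paper: `m_λ f → |f|` a.e. as `λ → 1⁻`. -/
theorem stmt17 (n : ℕ) (f : (Fin n → ℝ) → ℝ) (hf : Measurable f)
    (hfin : ∀ α : ℝ, 0 < α → volume {x | α < |f x|} < ∞) :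
    ∀ᵐ x ∂(volume : Measure (Fin n → ℝ)),
      Tendsto (fun la : ℝ => mMed la (toE f) x) (𝓝[<] (1 : ℝ))
        (𝓝 (ENNReal.ofReal |f x|)) := by
  filter_upwards [aux_density n f hf] with x hx
  have habs : (0:ℝ) ≤ |f x| := abs_nonneg _
  -- the lower eventual bound
  have lower : ∀ ε' : ℝ, 0 < ε' →
      ∀ᶠ la in 𝓝[<] (1:ℝ), ENNReal.ofReal (|f x| - ε') ≤ mMed la (toE f) x := by
    intro ε' hε'
    rcases le_or_gt (|f x|) ε' with hle | hlt
    · have hz : ENNReal.ofReal (|f x| - ε') = 0 := ENNReal.ofReal_eq_zero.2 (by linarith)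
      filter_upwards with la
      rw [hz]; exact zero_le
    · filter_upwards [Ioo_mem_nhdsLT_of_mem (show (1:ℝ) ∈ Ioc (0:ℝ) 1 from ⟨one_pos, le_rfl⟩)]
        with la hla
      obtain ⟨hla0, hla1⟩ := hla
      set δ : ℝ := (1 - la)/2 with hδdef
      have hδpos : 0 < δ := by rw [hδdef]; linarith
      obtain ⟨r₀, hr₀, hr⟩ := hx ε' δ hε' hδpos
      set Q := Metric.closedBall x r₀ with hQdef
      have hQvol0 : volume Q ≠ 0 := (Metric.measure_closedBall_pos _ x hr₀).ne'
      have hQvolt : volume Q ≠ ∞ := measure_closedBall_lt_top.ne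
      have hxQ : x ∈ Q := Metric.mem_closedBall_self hr₀.le
      have key : ENNReal.ofReal (|f x| - ε')
          ≤ rearr (Q.indicator (toE f)) (ENNReal.ofReal la * volume Q) := by
        apply le_sInf
        rintro α ⟨hα0, hαv⟩
        by_contra hcon
        push_neg at hcon
        have hsub : Q ∩ {y | ¬ (ε' ≤ |f y - f x|)}
            ⊆ {y | α < Q.indicator (toE f) y} := by
          rintro y ⟨hyQ, hyg⟩
          simp only [mem_setOf_eq, not_le] at hyg
          rw [mem_setOf_eq, indicator_of_mem hyQ]
          refine hcon.trans_le (ENNReal.ofReal_le_ofReal ?_)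
          have htri := abs_sub_abs_le_abs_sub (f x) (f y)
          rw [abs_sub_comm] at htri
          linarith
        have hQsplit : volume Q ≤
            volume ({y | ε' ≤ |f y - f x|} ∩ Q) + volume (Q ∩ {y | ¬ (ε' ≤ |f y - f x|)}) := by
          refine le_trans (measure_mono ?_) (measure_union_le _ _)
          intro y hy
          by_cases hc : ε' ≤ |f y - f x|
          · exact Or.inl ⟨hc, hy⟩
          · exact Or.inr ⟨hy, hc⟩
        have hbad : volume ({y | ε' ≤ |f y - f x|} ∩ Q) ≤ ENNReal.ofReal δ * volume Q :=
          hr r₀ hr₀ le_rfl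
        have hgood : volume (Q ∩ {y | ¬ (ε' ≤ |f y - f x|)})
            ≤ ENNReal.ofReal la * volume Q := le_trans (measure_mono hsub) hαv
        have hle2 : volume Q ≤ ENNReal.ofReal (δ + la) * volume Q := by
          calc volume Q ≤ _ := hQsplit
            _ ≤ ENNReal.ofReal δ * volume Q + ENNReal.ofReal la * volume Q :=
                add_le_add hbad hgood
            _ = ENNReal.ofReal (δ + la) * volume Q := by
                rw [ENNReal.ofReal_add hδpos.le hla0.le, add_mul]
        have hlt1 : ENNReal.ofReal (δ + la) * volume Q < volume Q := by
          conv_rhs => rw [← one_mul (volume Q)]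
          refine ENNReal.mul_lt_mul_left hQvol0 hQvolt ?_; rw [← ENNReal.ofReal_one]
          exact (ENNReal.ofReal_lt_ofReal_iff one_pos).2 (by rw [hδdef]; linarith)
        exact absurd (hle2.trans_lt hlt1) (lt_irrefl _)
      refine key.trans ?_
      exact le_iSup₂_of_le Q (aux_cb_cube n x r₀ hr₀) (le_iSup_of_le hxQ le_rfl)
  -- the upper eventual bound
  have upper : ∀ ε' : ℝ, 0 < ε' →
      ∀ᶠ la in 𝓝[<] (1:ℝ), mMed la (toE f) x ≤ ENNReal.ofReal (|f x| + ε') := by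
    intro ε' hε'
    set α : ℝ := |f x| + ε' with hαdef
    have hα0 : 0 < α := by rw [hαdef]; linarith
    have hM : volume {y | α < |f y|} < ∞ := hfin α hα0
    set M : ℝ≥0∞ := volume {y | α < |f y|} with hMdef
    set δ₀ : ℝ := 1 / (2 * 2 ^ n) with hδ₀def
    have hδ₀pos : 0 < δ₀ := by rw [hδ₀def]; positivity
    obtain ⟨r₀, hr₀, hr⟩ := hx ε' δ₀ hε' hδ₀pos
    set g₀r : ℝ := r₀ ^ n / 2 with hg₀def
    have hg₀pos : 0 < g₀r := by rw [hg₀def]; positivity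
    set V₀r : ℝ := 2 * M.toReal + 1 with hV₀def
    have hMto : (0:ℝ) ≤ M.toReal := ENNReal.toReal_nonneg
    have hV₀pos : 0 < V₀r := by rw [hV₀def]; linarith
    set c : ℝ := min (g₀r / V₀r) (1/2) with hcdef
    have hcpos : 0 < c := by rw [hcdef]; positivity
    have hclt : max (1/2 : ℝ) (1 - c) < 1 := by
      rw [max_lt_iff]; constructor <;> [linarith; linarith]
    filter_upwards [Ioo_mem_nhdsLT_of_mem
      (show (1:ℝ) ∈ Ioc (max (1/2 : ℝ) (1 - c)) 1 from ⟨hclt, le_rfl⟩)] with la hla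
    obtain ⟨hla0, hla1⟩ := hla
    have hlahalf : (1/2 : ℝ) ≤ la := le_of_lt (lt_of_le_of_lt (le_max_left _ _) hla0)
    have hlac : 1 - la ≤ c := by
      have := lt_of_le_of_lt (le_max_right (1/2 : ℝ) (1 - c)) hla0
      linarith
    have hla0' : (0:ℝ) < la := by linarith
    -- key per-cube bound
    have percube : ∀ Q : Set (Fin n → ℝ), IsCube Q → x ∈ Q →
        rearr (Q.indicator (toE f)) (ENNReal.ofReal la * volume Q)
          ≤ ENNReal.ofReal α := by
      rintro Q ⟨a, h, hh, rfl⟩ hxQ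
      apply sInf_le
      refine ⟨ENNReal.ofReal_pos.2 hα0, ?_⟩
      set Q := Icc a (fun i => a i + h) with hQdef
      have hQvol : volume Q = ENNReal.ofReal h ^ n := aux_cube_vol n a h
      have hQvolt : volume Q ≠ ∞ := by
        rw [hQvol]; exact (ENNReal.pow_lt_top ENNReal.ofReal_lt_top).ne
      -- superlevel set is inside (bad for ε') ∩ Q
      have hsupsub : {y | ENNReal.ofReal α < Q.indicator (toE f) y}
          ⊆ {y | ε' ≤ |f y - f x|} ∩ Q := by
        intro y hy
        rw [mem_setOf_eq] at hy
        by_cases hyQ : y ∈ Q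
        · rw [indicator_of_mem hyQ] at hy
          have hαy : α < |f y| := by
            by_contra hcc
            push_neg at hcc
            exact absurd (hy.trans_le (ENNReal.ofReal_le_ofReal hcc)) (lt_irrefl _)
          refine ⟨?_, hyQ⟩
          have htri := abs_sub_abs_le_abs_sub (f y) (f x)
          rw [mem_setOf_eq]
          linarith
        · rw [indicator_of_notMem hyQ] at hy
          exact absurd hy (by simp)
      have hsupsub2 : {y | ENNReal.ofReal α < Q.indicator (toE f) y}
          ⊆ {y | α < |f y|} := by
        intro y hy
        rw [mem_setOf_eq] at hy
        by_cases hyQ : y ∈ Q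
        · rw [indicator_of_mem hyQ] at hy
          by_contra hcc
          simp only [mem_setOf_eq, not_lt] at hcc
          exact absurd (hy.trans_le (ENNReal.ofReal_le_ofReal hcc)) (lt_irrefl _)
        · rw [indicator_of_notMem hyQ] at hy
          exact absurd hy (by simp)
      have hδ₀2n : δ₀ * (2:ℝ) ^ n = 1/2 := by
        rw [hδ₀def]; field_simp
      rcases le_or_gt h r₀ with hhr | hhr
      · -- small cube: contained in closedBall x h
        have hball := aux_cube_sub_ball n a h hh.le x hxQ
        calc volume {y | ENNReal.ofReal α < Q.indicator (toE f) y}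
            ≤ volume ({y | ε' ≤ |f y - f x|} ∩ Metric.closedBall x h) := by
              refine measure_mono (fun y hy => ?_)
              have := hsupsub hy
              exact ⟨this.1, hball this.2⟩
          _ ≤ ENNReal.ofReal δ₀ * volume (Metric.closedBall x h) := hr h hh hhr
          _ = ENNReal.ofReal (1/2) * volume Q := by
              rw [aux_cb_vol n x h hh.le, hQvol, ← ENNReal.ofReal_pow (by linarith : (0:ℝ) ≤ 2 * h),
                ← ENNReal.ofReal_pow hh.le, ← ENNReal.ofReal_mul hδ₀pos.le,
                ← ENNReal.ofReal_mul (by norm_num : (0:ℝ) ≤ 1/2)]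
              congr 1
              rw [mul_pow, ← mul_assoc, hδ₀2n]
          _ ≤ ENNReal.ofReal la * volume Q := by
              gcongr
      · -- large cube: contains a subcube of side r₀ around x
        obtain ⟨a', hxQ', hQ'sub⟩ := aux_subcube n a h r₀ hr₀ hhr.le x hxQ
        set Q' := Icc a' (fun i => a' i + r₀) with hQ'def
        have hQ'ball : Q' ⊆ Metric.closedBall x r₀ := aux_cube_sub_ball n a' r₀ hr₀.le x hxQ'
        set good : Set (Fin n → ℝ) := Q' ∩ {y | ¬ (ε' ≤ |f y - f x|)} with hgooddef
        have hgoodmeas : MeasurableSet good := by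
          refine measurableSet_Icc.inter ?_
          exact ((measurableSet_Ici.preimage ((hf.sub measurable_const).abs)).compl)
        have hgoodQ : good ⊆ Q := fun y hy => hQ'sub hy.1
        have hgoodvol : ENNReal.ofReal g₀r ≤ volume good := by
          have hsplit : volume Q' ≤
              volume ({y | ε' ≤ |f y - f x|} ∩ Metric.closedBall x r₀) + volume good := by
            refine le_trans (measure_mono ?_) (measure_union_le _ _)
            intro y hy
            by_cases hc : ε' ≤ |f y - f x|
            · exact Or.inl ⟨hc, hQ'ball hy⟩
            · exact Or.inr ⟨hy, hc⟩
          have hbadvol : volume ({y | ε' ≤ |f y - f x|} ∩ Metric.closedBall x r₀)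
              ≤ ENNReal.ofReal (r₀ ^ n / 2) := by
            refine (hr r₀ hr₀ le_rfl).trans ?_
            rw [aux_cb_vol n x r₀ hr₀.le, ← ENNReal.ofReal_pow (by linarith : (0:ℝ) ≤ 2 * r₀),
              ← ENNReal.ofReal_mul hδ₀pos.le]
            refine ENNReal.ofReal_le_ofReal ?_
            rw [mul_pow, ← mul_assoc, hδ₀2n]
            linarith
          have hQ'vol : volume Q' = ENNReal.ofReal (r₀ ^ n) := by
            rw [hQ'def, aux_cube_vol, ← ENNReal.ofReal_pow hr₀.le]
          rw [← tsub_le_iff_left] at hsplit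
          refine le_trans ?_ (le_trans (tsub_le_tsub_left hbadvol _) hsplit)
          rw [hQ'vol, ← ENNReal.ofReal_sub _ (by positivity)]
          refine ENNReal.ofReal_le_ofReal ?_
          rw [hg₀def]; linarith
        have hgoodtop : volume good ≠ ∞ :=
          ((measure_mono hgoodQ).trans_lt hQvolt.lt_top).ne
        have hdisj : {y | ENNReal.ofReal α < Q.indicator (toE f) y} ⊆ Q \ good := by
          intro y hy
          refine ⟨(hsupsub hy).2, fun hyg => ?_⟩
          have h1 := (hsupsub hy).1
          have h2 : ¬ (ε' ≤ |f y - f x|) := hyg.2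
          exact h2 h1
        have hmain : volume {y | ENNReal.ofReal α < Q.indicator (toE f) y}
            ≤ volume Q - ENNReal.ofReal g₀r := by
          calc volume {y | ENNReal.ofReal α < Q.indicator (toE f) y}
              ≤ volume (Q \ good) := measure_mono hdisj
            _ = volume Q - volume good :=
                measure_diff hgoodQ hgoodmeas.nullMeasurableSet hgoodtop
            _ ≤ volume Q - ENNReal.ofReal g₀r := tsub_le_tsub_left hgoodvol _
        rcases le_or_gt (volume Q) (ENNReal.ofReal V₀r) with hV | hV
        · -- medium cube
          refine hmain.trans ?_
          rw [tsub_le_iff_right]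
          have hbound : ENNReal.ofReal (1 - la) * volume Q ≤ ENNReal.ofReal g₀r := by
            calc ENNReal.ofReal (1 - la) * volume Q
              ≤ ENNReal.ofReal (1 - la) * ENNReal.ofReal V₀r := by gcongr
            _ = ENNReal.ofReal ((1 - la) * V₀r) := (ENNReal.ofReal_mul (by linarith)).symm
            _ ≤ ENNReal.ofReal g₀r := by
                refine ENNReal.ofReal_le_ofReal ?_
                have h1 : (1 - la) * V₀r ≤ c * V₀r := by
                  apply mul_le_mul_of_nonneg_right hlac hV₀pos.le
                have h2 : c * V₀r ≤ (g₀r / V₀r) * V₀r := by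
                  apply mul_le_mul_of_nonneg_right (min_le_left _ _) hV₀pos.le
                have h3 : (g₀r / V₀r) * V₀r = g₀r := by field_simp
                exact h1.trans (h2.trans h3.le)
          calc volume Q
              = ENNReal.ofReal la * volume Q + ENNReal.ofReal (1 - la) * volume Q := by
                rw [← add_mul, ← ENNReal.ofReal_add hla0'.le (by linarith)]
                have h4 : la + (1 - la) = 1 := by ring
                rw [h4, ENNReal.ofReal_one, one_mul]
            _ ≤ ENNReal.ofReal la * volume Q + ENNReal.ofReal g₀r := by gcongr
        · -- big cube
          calc volume {y | ENNReal.ofReal α < Q.indicator (toE f) y}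
              ≤ M := measure_mono hsupsub2
            _ ≤ ENNReal.ofReal (1/2) * ENNReal.ofReal V₀r := by
                rw [← ENNReal.ofReal_mul (by norm_num)]
                have : M = ENNReal.ofReal M.toReal := (ENNReal.ofReal_toReal hM.ne).symm
                rw [this]
                refine ENNReal.ofReal_le_ofReal ?_
                rw [hV₀def]; linarith
            _ ≤ ENNReal.ofReal la * volume Q := by
                exact mul_le_mul' (ENNReal.ofReal_le_ofReal hlahalf) hV.le
    refine iSup₂_le fun Q hQ => iSup_le fun hxQ => percube Q hQ hxQ
  -- combine
  rw [ENNReal.tendsto_nhds ENNReal.ofReal_ne_top]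
  intro ε hε
  rcases eq_or_ne ε ∞ with rfl | hεtop
  · filter_upwards [lower 1 one_pos] with la hla
    constructor
    · simp
    · simp
  · have hε' : 0 < ε.toReal := ENNReal.toReal_pos hε.ne' hεtop
    filter_upwards [lower ε.toReal hε', upper ε.toReal hε'] with la h1 h2
    constructor
    · refine le_trans (le_of_eq ?_) h1
      rw [ENNReal.ofReal_sub _ hε'.le, ENNReal.ofReal_toReal hεtop]
    · refine h2.trans (le_of_eq ?_)
      rw [ENNReal.ofReal_add habs hε'.le, ENNReal.ofReal_toReal hεtop]
end

section
/- Let f be a measurable function on ℝⁿ and λ ∈ (0,1). Then |f(x)| ≤ m_λ f(x) at every point x of approximate continuity of f; in particular, |f| ≤ m_λ f almost everywhere on ℝⁿ. -/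
open MeasureTheory Set Filter
open scoped ENNReal Topology

lemma aux_pointwise (n : ℕ) (f : (Fin n → ℝ) → ℝ) (hf : Measurable f)
    (la : ℝ) (hla : la ∈ Set.Ioo (0 : ℝ) 1) (x : Fin n → ℝ)
    (hx : ApproxContinuousAt f x) :
    ENNReal.ofReal |f x| ≤ mMed la (toE f) x := by
  refine le_of_forall_lt fun c hc => ?_
  have hctop : c ≠ ∞ := hc.ne_top
  have hcr : c.toReal < |f x| := (ENNReal.lt_ofReal_iff_toReal_lt hctop).1 hc
  have hc0 : (0:ℝ) ≤ c.toReal := ENNReal.toReal_nonneg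
  set ε : ℝ := (|f x| - c.toReal) / 2 with hε_def
  have hε : 0 < ε := by simp only [hε_def]; linarith
  have hcβ : c < ENNReal.ofReal (|f x| - ε) := by
    rw [ENNReal.lt_ofReal_iff_toReal_lt hctop, hε_def]; linarith
  -- find a good radius
  have hb0 : (0:ℝ≥0∞) < ENNReal.ofReal (1 - la) := by
    rw [ENNReal.ofReal_pos]; linarith [hla.2]
  have hev : ∀ᶠ r : ℝ in 𝓝[>] 0,
      volume ({y | ε ≤ |f y - f x|} ∩ Metric.ball x r) / volume (Metric.ball x r)
        ∈ Iio (ENNReal.ofReal (1 - la)) := (hx ε hε) (Iio_mem_nhds hb0)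
  obtain ⟨r, hrlt, hr0⟩ := (hev.and self_mem_nhdsWithin).exists
  rw [Set.mem_Iio] at hrlt
  set S : Set (Fin n → ℝ) := {y | ε ≤ |f y - f x|} with hS_def
  have hS : MeasurableSet S :=
    measurableSet_le measurable_const ((hf.sub_const (f x)).abs)
  set B : Set (Fin n → ℝ) := Metric.ball x r with hB_def
  set Q : Set (Fin n → ℝ) :=
    Set.Icc (fun i => x i - r) (fun i => (fun i => x i - r) i + 2 * r) with hQ_def
  have hQcube : IsCube Q := ⟨fun i => x i - r, 2 * r, by linarith, rfl⟩
  have hxQ : x ∈ Q := by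
    constructor <;> intro i <;> simp only [] <;> linarith
  have hBQ : B ⊆ Q := by
    intro y hy
    have hyd : dist y x < r := Metric.mem_ball.1 hy
    constructor <;> intro i <;>
      have h1 : dist (y i) (x i) ≤ dist y x := dist_le_pi_dist y x i <;>
      rw [Real.dist_eq] at h1 <;>
      have := abs_lt.1 (lt_of_le_of_lt h1 hyd) <;>
      simp only [] <;> linarith [this.1, this.2]
  have hQvol : volume Q = volume B := by
    rw [hQ_def, hB_def, Real.volume_Icc_pi, Real.volume_pi_ball x hr0]
    have : ∀ i : Fin n, (fun i => x i - r) i + 2 * r - (fun i => x i - r) i = 2 * r :=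
      fun i => by ring
    simp only [this, Finset.prod_const, Finset.card_univ, Fintype.card_fin]
    rw [← ENNReal.ofReal_pow (by linarith)]
  have hV0 : volume B ≠ 0 := (Metric.measure_ball_pos volume x hr0).ne'
  have hVtop : volume B ≠ ∞ := (measure_ball_lt_top).ne
  -- the measure bound
  have hm : volume (S ∩ B) < ENNReal.ofReal (1 - la) * volume B :=
    (ENNReal.div_lt_iff (Or.inl hV0) (Or.inl hVtop)).1 hrlt
  have hmfin : volume (S ∩ B) ≠ ∞ :=
    ne_top_of_le_ne_top hVtop (measure_mono inter_subset_right)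
  set t : ℝ≥0∞ := ENNReal.ofReal la * volume Q with ht_def
  have httop : t ≠ ∞ := ENNReal.mul_ne_top ENNReal.ofReal_ne_top (hQvol ▸ hVtop)
  have hsum : t + ENNReal.ofReal (1 - la) * volume B = volume B := by
    rw [ht_def, hQvol, ← add_mul, ← ENNReal.ofReal_add hla.1.le (by linarith [hla.2])]
    norm_num
  have hkey : t < volume (B \ S) := by
    have h1 : t + volume (S ∩ B) < volume B := by
      calc t + volume (S ∩ B) < t + ENNReal.ofReal (1 - la) * volume B :=
            ENNReal.add_lt_add_left httop hm
        _ = volume B := hsum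
    have h2 : volume (B ∩ S) + volume (B \ S) = volume B :=
      measure_inter_add_diff B hS
    rw [inter_comm S B] at h1
    rw [← h2, add_comm t _] at h1
    exact lt_of_add_lt_add_left h1
  -- now bound rearr from below
  have hrearr : ENNReal.ofReal (|f x| - ε) ≤
      rearr (Q.indicator (toE f)) (ENNReal.ofReal la * volume Q) := by
    refine le_sInf fun α hα => ?_
    rcases hα with ⟨hα0, hαvol⟩
    by_contra hlt
    push_neg at hlt
    have hsub : B \ S ⊆ {y | α < Q.indicator (toE f) y} := by
      intro y ⟨hyB, hyS⟩
      have hyQ : y ∈ Q := hBQ hyB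
      have hyf : |f x| - ε < |f y| := by
        have : |f y - f x| < ε := lt_of_not_ge hyS
        have := abs_sub_abs_le_abs_sub (f x) (f y)
        rw [abs_sub_comm (f x) (f y)] at this
        linarith
      have : ENNReal.ofReal (|f x| - ε) ≤ toE f y :=
        ENNReal.ofReal_le_ofReal hyf.le
      rw [Set.mem_setOf_eq, Set.indicator_of_mem hyQ]
      exact lt_of_lt_of_le hlt this
    have : t < volume {y | α < Q.indicator (toE f) y} :=
      lt_of_lt_of_le hkey (measure_mono hsub)
    rw [← ht_def] at hαvol
    exact absurd hαvol (not_le.2 this)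
  calc c < ENNReal.ofReal (|f x| - ε) := hcβ
    _ ≤ rearr (Q.indicator (toE f)) (ENNReal.ofReal la * volume Q) := hrearr
    _ ≤ mMed la (toE f) x :=
        le_iSup_of_le Q (le_iSup_of_le hQcube (le_iSup_of_le hxQ le_rfl))

lemma aux_ae_approx (n : ℕ) (f : (Fin n → ℝ) → ℝ) (hf : Measurable f) :
    ∀ᵐ x ∂(volume : Measure (Fin n → ℝ)), ApproxContinuousAt f x := by
  set E : ℚ × ℚ → Set (Fin n → ℝ) := fun p => f ⁻¹' (Set.Ioo (p.1 : ℝ) (p.2 : ℝ))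
    with hE_def
  have hE : ∀ p, MeasurableSet (E p) := fun p => hf measurableSet_Ioo
  have H : ∀ᵐ x ∂(volume : Measure (Fin n → ℝ)), ∀ p : ℚ × ℚ,
      Tendsto (fun r =>
          volume (E p ∩ Metric.closedBall x r) / volume (Metric.closedBall x r))
        (𝓝[>] 0) (𝓝 ((E p).indicator 1 x)) :=
    ae_all_iff.2 fun p =>
      Besicovitch.ae_tendsto_measure_inter_div_of_measurableSet volume (hE p)
  filter_upwards [H] with x hx
  intro ε hε
  obtain ⟨a, ha1, ha2⟩ := exists_rat_btwn (show f x - ε < f x by linarith)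
  obtain ⟨b, hb1, hb2⟩ := exists_rat_btwn (show f x < f x + ε by linarith)
  have hxE : x ∈ E (a, b) := ⟨ha2, hb1⟩
  have hd := hx (a, b)
  rw [Set.indicator_of_mem hxE, Pi.one_apply] at hd
  have hup : Tendsto (fun r : ℝ => 1 -
      volume (E (a, b) ∩ Metric.closedBall x r) / volume (Metric.closedBall x r))
      (𝓝[>] 0) (𝓝 0) := by
    have := ENNReal.Tendsto.sub (tendsto_const_nhds (x := (1 : ℝ≥0∞))) hd
      (Or.inl ENNReal.one_ne_top)
    simpa using this
  refine tendsto_of_tendsto_of_tendsto_of_le_of_le' tendsto_const_nhds hup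
    (Eventually.of_forall fun r => zero_le) ?_
  filter_upwards [self_mem_nhdsWithin] with r hr0
  have hr0 : (0 : ℝ) < r := hr0
  have hVcb : volume (Metric.closedBall x r) = volume (Metric.ball x r) := by
    rw [Real.volume_pi_closedBall x hr0.le, Real.volume_pi_ball x hr0]
  set V := volume (Metric.ball x r) with hV_def
  have hV0 : V ≠ 0 := (Metric.measure_ball_pos volume x hr0).ne'
  have hVtop : V ≠ ∞ := measure_ball_lt_top.ne
  have hnull : volume (Metric.closedBall x r \ Metric.ball x r) = 0 := by
    rw [measure_diff Metric.ball_subset_closedBall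
      measurableSet_ball.nullMeasurableSet hVtop, hVcb, tsub_self]
  have hsub2 : E (a, b) ∩ Metric.closedBall x r ⊆
      (Metric.ball x r ∩ E (a, b)) ∪ (Metric.closedBall x r \ Metric.ball x r) := by
    rintro y ⟨hyE, hycb⟩
    by_cases hyb : y ∈ Metric.ball x r
    · exact Or.inl ⟨hyb, hyE⟩
    · exact Or.inr ⟨hycb, hyb⟩
  have hEle : volume (E (a, b) ∩ Metric.closedBall x r)
      ≤ volume (Metric.ball x r ∩ E (a, b)) := by
    calc volume (E (a, b) ∩ Metric.closedBall x r)
        ≤ volume ((Metric.ball x r ∩ E (a, b)) ∪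
            (Metric.closedBall x r \ Metric.ball x r)) := measure_mono hsub2
      _ ≤ volume (Metric.ball x r ∩ E (a, b)) +
            volume (Metric.closedBall x r \ Metric.ball x r) := measure_union_le _ _
      _ = volume (Metric.ball x r ∩ E (a, b)) := by rw [hnull, add_zero]
  have hSE : {y | ε ≤ |f y - f x|} ∩ Metric.ball x r ⊆
      Metric.ball x r \ E (a, b) := by
    rintro y ⟨hyS, hyb⟩
    refine ⟨hyb, fun hyE => ?_⟩
    rcases hyE with ⟨h1, h2⟩
    rw [Set.mem_setOf_eq] at hyS
    have habs : |f y - f x| < ε := abs_sub_lt_iff.2 ⟨by linarith, by linarith⟩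
    linarith
  have hinterfin : volume (Metric.ball x r ∩ E (a, b)) ≠ ∞ :=
    ne_top_of_le_ne_top hVtop (measure_mono inter_subset_left)
  have hdiff : volume (Metric.ball x r \ E (a, b))
      = V - volume (Metric.ball x r ∩ E (a, b)) := by
    have h2 : volume (Metric.ball x r \ E (a, b)) +
        volume (Metric.ball x r ∩ E (a, b)) = V := by
      rw [add_comm]; exact measure_inter_add_diff _ (hE (a, b))
    exact ENNReal.eq_sub_of_add_eq hinterfin h2
  set m := volume (E (a, b) ∩ Metric.closedBall x r) with hm_def
  have hmfin : m ≠ ∞ := ne_top_of_le_ne_top hinterfin hEle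
  have hmV : m ≤ V := hEle.trans (measure_mono inter_subset_left)
  have heq : (V - m) / V = 1 - m / V := by
    have h1 : (V - m) / V + m / V = 1 := by
      rw [ENNReal.div_add_div_same, tsub_add_cancel_of_le hmV,
        ENNReal.div_self hV0 hVtop]
    exact ENNReal.eq_sub_of_add_eq (ENNReal.div_lt_top hmfin hV0).ne h1
  calc volume ({y | ε ≤ |f y - f x|} ∩ Metric.ball x r) / volume (Metric.ball x r)
      ≤ volume (Metric.ball x r \ E (a, b)) / V :=
        ENNReal.div_le_div_right (measure_mono hSE) V
    _ = (V - volume (Metric.ball x r ∩ E (a, b))) / V := by rw [hdiff]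
    _ ≤ (V - m) / V := ENNReal.div_le_div_right (tsub_le_tsub_left hEle V) V
    _ = 1 - m / V := heq
    _ = 1 - m / volume (Metric.closedBall x r) := by rw [hVcb]

/-- `|f(x)| ≤ m_λ f(x)` at every point of approximate continuity,
and in particular almost everywhere. -/
theorem stmt18 (n : ℕ) (f : (Fin n → ℝ) → ℝ) (hf : Measurable f)
    (la : ℝ) (hla : la ∈ Set.Ioo (0 : ℝ) 1) :
    (∀ x : Fin n → ℝ, ApproxContinuousAt f x →
      ENNReal.ofReal |f x| ≤ mMed la (toE f) x) ∧
    ∀ᵐ x ∂(volume : Measure (Fin n → ℝ)),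
      ENNReal.ofReal |f x| ≤ mMed la (toE f) x := by
  refine ⟨fun x hx => aux_pointwise n f hf la hla x hx, ?_⟩
  filter_upwards [aux_ae_approx n f hf] with x hx
  exact aux_pointwise n f hf la hla x hx
end
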